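/- Robustness of magic upper bound for subset phase states: for any subset S ⊆ {0,1}^n with |S| ≥ 2 and any f: {0,1}^n → {0,1}, the pure state |ψ_{f,S}⟩ = |S|^{−1/2} Σ_{x∈S} (−1)^{f(x)}|x⟩ admits a decomposition ψ_{f,S} = Σ_i c_i σ_i into pure stabilizer states σ_i with Σ_i |c_i| ≤ |S|; hence the log-robustness satisfies ℛ(ψ_{f,S}) ≤ log|S|. -/

import Mathlib

open scoped BigOperators
open ComplexConjugate
open scoped ComplexOrder

noncomputable def traceNorm {ι : Type*} [Fintype ι] [DecidableEq ι] (A : Matrix ι ι ℂ) : ℝ :=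
  (((Matrix.posSemidef_conjTranspose_mul_self A).1.eigenvectorUnitary.1 *
      Matrix.diagonal (((↑) : ℝ → ℂ) ∘ (√·) ∘ (Matrix.posSemidef_conjTranspose_mul_self A).1.eigenvalues) *
      (star (Matrix.posSemidef_conjTranspose_mul_self A).1.eigenvectorUnitary :
        Matrix ι ι ℂ)).trace).re

noncomputable def proj {ι : Type*} (v : ι → ℂ) : Matrix ι ι ℂ :=
  Matrix.of fun i j => v i * conj (v j)

noncomputable def tensorPow {ι : Type*} (A : Matrix ι ι ℂ) (t : ℕ) :
    Matrix (Fin t → ι) (Fin t → ι) ℂ :=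
  Matrix.of fun x y => ∏ i, A (x i) (y i)

noncomputable def pauli {n : ℕ} (a b : Fin n → ZMod 2) :
    Matrix (Fin n → ZMod 2) (Fin n → ZMod 2) ℂ :=
  Matrix.of fun x y =>
    if x = y + a then
      Complex.I ^ (∑ i, (a i * b i).val) * (-1 : ℂ) ^ (∑ i, (b i * y i).val)
    else 0

noncomputable def xi {n : ℕ} (ρ : Matrix (Fin n → ZMod 2) (Fin n → ZMod 2) ℂ)
    (p : (Fin n → ZMod 2) × (Fin n → ZMod 2)) : ℝ :=
  Complex.normSq ((pauli p.1 p.2 * ρ).trace) / 2 ^ n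

/-- A unit vector represents a pure stabilizer state iff its stabilizer group
G_ψ = {P : tr(Pψ) = ±1} has the maximal size 2^n. -/
def IsStabVec {n : ℕ} (u : (Fin n → ZMod 2) → ℂ) : Prop :=
  {p : (Fin n → ZMod 2) × (Fin n → ZMod 2) |
      Complex.normSq ((pauli p.1 p.2 * proj u).trace) = 1}.ncard = 2 ^ n

/-- A matrix is a pure stabilizer state if it is the projector onto a stabilizer vector. -/
def IsStabState {n : ℕ} (ρ : Matrix (Fin n → ZMod 2) (Fin n → ZMod 2) ℂ) : Prop :=
  ∃ u : (Fin n → ZMod 2) → ℂ,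
    (∑ x, Complex.normSq (u x) = 1) ∧ ρ = proj u ∧ IsStabVec u

/-- Log-robustness of magic: log₂ of the least ℓ¹-norm of coefficients in a real
decomposition into pure stabilizer states. -/
noncomputable def logRob {n : ℕ}
    (ρ : Matrix (Fin n → ZMod 2) (Fin n → ZMod 2) ℂ) : ℝ :=
  Real.logb 2 (sInf {t : ℝ | ∃ (m : ℕ) (c : Fin m → ℝ)
    (σ : Fin m → Matrix (Fin n → ZMod 2) (Fin n → ZMod 2) ℂ),
      (∀ i, IsStabState (σ i)) ∧ ρ = ∑ i, (c i : ℂ) • σ i ∧ t = ∑ i, |c i|})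

/-! Expanding ψ = |S|^{-1/2} ∑_{x ∈ S} s_x |x⟩ with signs s_x = ±1,
ψψ† = |S|⁻¹ ∑_{x ∈ S} |x⟩⟨x| + ∑_{x ≠ y} s_x s_y |S|⁻¹ |x⟩⟨y|,
and |x⟩⟨y| + |y⟩⟨x| = σ⁺_{xy} - σ⁻_{xy} is a difference of the projectors onto (|x⟩ ± |y⟩)/√2.
Running over ordered pairs x ≠ y, each of σ^±_{xy} gets weight |S|⁻¹/2, so the ℓ¹-norm is
1 + |S|(|S| - 1) |S|⁻¹ = |S|.
That |x⟩ and (|x⟩ ± |y⟩)/√2 are stabilizer states is checked by counting the Paulis X^a Z^b with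
|tr(X^a Z^b ψψ†)| = 1: they are {0} × 𝔽₂ⁿ, resp. {0, x + y} × (x + y)^⊥. -/

open Matrix

lemma neg_one_pow_sum_val {ι : Type*} [Fintype ι] (g : ι → ZMod 2) :
    (-1 : ℂ) ^ (∑ i, (g i).val) = (-1) ^ (∑ i, g i).val := by
  have hcast : ((∑ i, (g i).val : ℕ) : ZMod 2) = ∑ i, g i := by
    push_cast [ZMod.natCast_val, ZMod.cast_id]
    rfl
  rw [neg_one_pow_eq_pow_mod_two, ← hcast, ZMod.val_natCast]

lemma normSq_neg_one_pow_add_div_two (x y : ZMod 2) :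
    Complex.normSq (((-1 : ℂ) ^ x.val + (-1) ^ y.val) / 2) = if x = y then 1 else 0 := by
  have h : ∀ t : ZMod 2, t = 0 ∨ t = 1 := by decide
  rcases h x with rfl | rfl <;> rcases h y with rfl | rfl <;> norm_num [ZMod.val_one]

lemma ZModModule.eq_add_iff_eq_add {G : Type*} [AddCommGroup G] [Module (ZMod 2) G]
    {x y z : G} : x = y + z ↔ z = y + x := by
  constructor <;> rintro rfl <;> simp [← add_assoc, ZModModule.add_self]

lemma ncard_dotProduct_eq_zero_mul {K ι : Type*} [Field K] [Finite K] [Fintype ι]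
    [DecidableEq ι] {v : ι → K} (hv : v ≠ 0) :
    {b : ι → K | b ⬝ᵥ v = 0}.ncard * Nat.card K = Nat.card K ^ Nat.card ι := by
  obtain ⟨j, hj⟩ := Function.ne_iff.mp hv
  let φ : (ι → K) →+ K :=
    { toFun := (· ⬝ᵥ v)
      map_zero' := zero_dotProduct v
      map_add' := fun _ _ => add_dotProduct _ _ _ }
  have hφ : Function.Surjective φ := fun c =>
    ⟨Pi.single j (c / v j), by simp [φ, div_mul_cancel₀ _ hj]⟩
  have := φ.ker.card_mul_index
  rwa [AddSubgroup.index_ker, AddMonoidHom.range_eq_top.mpr hφ, AddSubgroup.card_top,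
    Nat.card_fun] at this

lemma Finset.sum_sum_eq_sum_add_sum_offDiag {ι M : Type*} [DecidableEq ι] [AddCommMonoid M]
    (s : Finset ι) (F : ι → ι → M) :
    ∑ x ∈ s, ∑ y ∈ s, F x y = ∑ x ∈ s, F x x + ∑ p ∈ s.offDiag, F p.1 p.2 := by
  rw [← Finset.sum_product' s s F, ← Finset.diag_union_offDiag,
    Finset.sum_union (Finset.disjoint_diag_offDiag s), Finset.sum_diag]

lemma Finset.sum_offDiag_swap {ι M : Type*} [AddCommMonoid M] (s : Finset ι) (F : ι × ι → M) :
    ∑ p ∈ s.offDiag, F p.swap = ∑ p ∈ s.offDiag, F p :=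
  Finset.sum_nbij' Prod.swap Prod.swap (by simp +contextual [eq_comm])
    (by simp +contextual [eq_comm]) (by simp) (by simp) (by simp)

lemma sum_offDiag_single_eq_sum_smul {ι K : Type*} [Fintype ι] [DecidableEq ι] [Field K]
    [CharZero K] (s : Finset ι) (c : ι × ι → K) (hc : ∀ p, c p.swap = c p) :
    ∑ p ∈ s.offDiag, single p.1 p.2 (c p) =
      ∑ p ∈ s.offDiag, (c p / 2) • (single p.1 p.2 1 + single p.2 p.1 1) := by
  simp only [smul_add, smul_single, smul_eq_mul, mul_one, Finset.sum_add_distrib]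
  rw [← Finset.sum_offDiag_swap s fun p => single p.2 p.1 (c p / 2)]
  simp only [Prod.fst_swap, Prod.snd_swap, hc, ← Finset.sum_add_distrib, ← single_add, add_halves]

section Proj

variable {ι : Type*} [DecidableEq ι]

lemma proj_pi_single (z : ι) : proj (Pi.single z (1 : ℂ)) = single z z 1 := by
  ext a b
  by_cases ha : a = z <;> by_cases hb : b = z <;> subst_vars <;> simp [proj, *, Ne.symm]

lemma proj_eq_sum_single [Fintype ι] (s : Finset ι) {u : ι → ℂ} (hu : ∀ x ∉ s, u x = 0) :
    proj u = ∑ x ∈ s, ∑ y ∈ s, single x y (u x * conj (u y)) := by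
  ext a b
  simp only [proj, of_apply, Matrix.sum_apply, single_apply, ite_and, Finset.sum_ite_irrel,
    Finset.sum_const_zero, Finset.sum_ite_eq']
  by_cases ha : a ∈ s <;> by_cases hb : b ∈ s <;> simp [ha, hb, hu]

lemma trace_mul_proj_pi_single [Fintype ι] (M : Matrix ι ι ℂ) (z : ι) :
    (M * proj (Pi.single z 1)).trace = M z z := by
  simp [proj_pi_single, trace_mul_single]

noncomputable def pmVec (z w : ι) (ε : ℝ) : ι → ℂ :=
  (Real.sqrt 2 : ℂ)⁻¹ • (Pi.single z 1 + (ε : ℂ) • Pi.single w 1)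

variable [Fintype ι] {z w : ι}

lemma sum_normSq_pmVec (hzw : z ≠ w) {ε : ℝ} (hε : ε ^ 2 = 1) :
    ∑ x, Complex.normSq (pmVec z w ε x) = 1 := by
  rw [← Finset.sum_subset (Finset.subset_univ {z, w}) fun x _ hx => by simp_all [pmVec]]
  norm_num [Finset.sum_pair hzw, pmVec, hzw, hzw.symm, ← sq, hε]

lemma proj_pmVec (hzw : z ≠ w) (ε : ℝ) :
    proj (pmVec z w ε) = single z z 2⁻¹ + single z w ((ε : ℂ) / 2) +
      single w z ((ε : ℂ) / 2) + single w w ((ε : ℂ) ^ 2 / 2) := by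
  have hsqrt : ((Real.sqrt 2 : ℂ))⁻¹ ^ 2 = 2⁻¹ := by
    rw [inv_pow, ← Complex.ofReal_pow, Real.sq_sqrt zero_le_two, Complex.ofReal_ofNat]
  rw [proj_eq_sum_single {z, w} fun x hx => by simp_all [pmVec]]
  simp only [pmVec, Complex.coe_smul, Pi.smul_apply, Pi.add_apply, Complex.real_smul, smul_eq_mul,
    map_mul, map_inv₀, Complex.conj_ofReal, map_add, Finset.sum_pair hzw, Pi.single_eq_same,
    map_one, Pi.single_eq_of_ne hzw, Pi.single_eq_of_ne hzw.symm, map_zero, mul_zero, add_zero,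
    mul_one, zero_add]
  ring_nf
  rw [hsqrt]
  ring_nf
  abel

lemma proj_pmVec_sub_proj_pmVec (hzw : z ≠ w) :
    proj (pmVec z w 1) - proj (pmVec z w (-1)) = single z w 1 + single w z 1 := by
  ext a b
  simp only [proj_pmVec hzw, Matrix.sub_apply, Matrix.add_apply, single_apply]
  split_ifs <;> norm_num

lemma trace_mul_proj_pmVec (hzw : z ≠ w) (ε : ℝ) (M : Matrix ι ι ℂ) :
    (M * proj (pmVec z w ε)).trace = (M z z + ε * (M w z + M z w) + ε ^ 2 * M w w) / 2 := by
  simp only [proj_pmVec hzw, Matrix.mul_add, trace_add, trace_mul_single,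
    MulOpposite.smul_eq_mul_unop, MulOpposite.unop_op]
  ring

end Proj

section Pauli

variable {n : ℕ}

lemma pauli_apply_of_eq (a b : Fin n → ZMod 2) {x y : Fin n → ZMod 2} (h : x = y + a) :
    pauli a b x y = Complex.I ^ (∑ i, (a i * b i).val) * (-1) ^ (b ⬝ᵥ y).val := by
  simp [pauli, h, neg_one_pow_sum_val, dotProduct]

lemma pauli_apply_of_ne (a b : Fin n → ZMod 2) {x y : Fin n → ZMod 2} (h : x ≠ y + a) :
    pauli a b x y = 0 := by
  simp [pauli, h]

lemma pauli_apply_self (a b z : Fin n → ZMod 2) :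
    pauli a b z z = if a = 0 then (-1) ^ (b ⬝ᵥ z).val else 0 := by
  split_ifs with ha
  · subst ha
    simp [pauli_apply_of_eq 0 b (add_zero z).symm]
  · exact pauli_apply_of_ne a b (by simpa [left_eq_add] using ha)

lemma isStabState_proj_pi_single (z : Fin n → ZMod 2) : IsStabState (proj (Pi.single z 1)) := by
  refine ⟨Pi.single z 1, by simp [Pi.single_apply], rfl, ?_⟩
  have hset : {p : (Fin n → ZMod 2) × (Fin n → ZMod 2) |
      Complex.normSq ((pauli p.1 p.2 * proj (Pi.single z 1)).trace) = 1} = {0} ×ˢ Set.univ := by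
    ext ⟨a, b⟩
    by_cases ha : a = 0 <;> simp [trace_mul_proj_pi_single, pauli_apply_self, ha]
  rw [IsStabVec, hset, Set.ncard_prod, Set.ncard_singleton, Set.ncard_univ]
  simp

lemma normSq_trace_pauli_mul_proj_pmVec {z w : Fin n → ZMod 2} (hzw : z ≠ w) {ε : ℝ}
    (hε : ε ^ 2 = 1) (a b : Fin n → ZMod 2) :
    Complex.normSq ((pauli a b * proj (pmVec z w ε)).trace) =
      if (a = 0 ∨ a = z + w) ∧ b ⬝ᵥ z = b ⬝ᵥ w then 1 else 0 := by
  have hεC : (ε : ℂ) ^ 2 = 1 := by exact_mod_cast hε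
  have hεn : Complex.normSq ε = 1 := by rw [Complex.normSq_ofReal, ← sq, hε]
  rw [trace_mul_proj_pmVec hzw, pauli_apply_self, pauli_apply_self, hεC]
  by_cases ha : a = 0
  · subst ha
    rw [pauli_apply_of_ne 0 b (x := w) (by simpa using hzw.symm),
      pauli_apply_of_ne 0 b (x := z) (by simpa using hzw)]
    simpa using normSq_neg_one_pow_add_div_two _ _
  by_cases hv : a = z + w
  · rw [pauli_apply_of_eq a b (ZModModule.eq_add_iff_eq_add.mpr hv),
      pauli_apply_of_eq a b (ZModModule.eq_add_iff_eq_add.mpr (hv.trans (add_comm z w)))]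
    have hfactor : (0 + ε * (Complex.I ^ (∑ i, (a i * b i).val) * (-1) ^ (b ⬝ᵥ z).val +
        Complex.I ^ (∑ i, (a i * b i).val) * (-1) ^ (b ⬝ᵥ w).val) + 1 * 0 : ℂ) / 2 =
        ε * Complex.I ^ (∑ i, (a i * b i).val) *
          (((-1) ^ (b ⬝ᵥ z).val + (-1) ^ (b ⬝ᵥ w).val) / 2) := by
      ring
    simp only [ha, if_false, hfactor, map_mul, map_pow, hεn, Complex.normSq_I,
      normSq_neg_one_pow_add_div_two]
    simp [hv]
  · rw [pauli_apply_of_ne a b (x := w) fun h => hv (ZModModule.eq_add_iff_eq_add.mp h),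
      pauli_apply_of_ne a b (x := z) fun h =>
        hv ((ZModModule.eq_add_iff_eq_add.mp h).trans (add_comm w z))]
    simp [ha, hv]

lemma isStabState_proj_pmVec {z w : Fin n → ZMod 2} (hzw : z ≠ w) {ε : ℝ} (hε : ε ^ 2 = 1) :
    IsStabState (proj (pmVec z w ε)) := by
  refine ⟨pmVec z w ε, sum_normSq_pmVec hzw hε, rfl, ?_⟩
  have hset : {p : (Fin n → ZMod 2) × (Fin n → ZMod 2) |
      Complex.normSq ((pauli p.1 p.2 * proj (pmVec z w ε)).trace) = 1} =
      {0, z + w} ×ˢ {b | b ⬝ᵥ (z + w) = 0} := by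
    ext ⟨a, b⟩
    simp [normSq_trace_pauli_mul_proj_pmVec hzw hε, dotProduct_add, add_eq_zero_iff_eq_neg,
      ZModModule.neg_eq_self]
  have hv : z + w ≠ 0 := fun h => hzw (by rwa [add_eq_zero_iff_eq_neg, ZModModule.neg_eq_self] at h)
  have hker := ncard_dotProduct_eq_zero_mul hv
  rw [Nat.card_zmod, Nat.card_eq_fintype_card (α := Fin n), Fintype.card_fin] at hker
  rw [IsStabVec, hset, Set.ncard_prod, Set.ncard_pair hv.symm, mul_comm, hker]

end Pauli

section SubsetPhase

variable {n : ℕ} (S : Finset (Fin n → ZMod 2)) (f : (Fin n → ZMod 2) → ZMod 2)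

noncomputable def subsetPhaseVec : (Fin n → ZMod 2) → ℂ :=
  fun x => if x ∈ S then (-1 : ℂ) ^ (f x).val / (Real.sqrt S.card : ℂ) else 0

lemma proj_subsetPhaseVec :
    proj (subsetPhaseVec S f) = ∑ x ∈ S, (S.card : ℂ)⁻¹ • proj (Pi.single x 1) +
      ∑ p ∈ S.offDiag, ((-1 : ℂ) ^ (f p.1).val * (-1) ^ (f p.2).val / S.card / 2) •
        (proj (pmVec p.1 p.2 1) - proj (pmVec p.1 p.2 (-1))) := by
  have hψ : ∀ x ∈ S, ∀ y ∈ S, subsetPhaseVec S f x * conj (subsetPhaseVec S f y) =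
      (-1 : ℂ) ^ (f x).val * (-1) ^ (f y).val / S.card := by
    intro x hx y hy
    have hconj : conj ((-1 : ℂ) ^ (f y).val) = (-1) ^ (f y).val := by simp
    rw [subsetPhaseVec, subsetPhaseVec, if_pos hx, if_pos hy, map_div₀, hconj,
      Complex.conj_ofReal, div_mul_div_comm, ← Complex.ofReal_mul,
      Real.mul_self_sqrt (Nat.cast_nonneg _), Complex.ofReal_natCast]
  rw [proj_eq_sum_single S (u := subsetPhaseVec S f) fun x hx => if_neg hx,
    Finset.sum_sum_eq_sum_add_sum_offDiag]
  congr 1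
  · refine Finset.sum_congr rfl fun x hx => ?_
    rw [hψ x hx x hx, proj_pi_single, smul_single, ← pow_add, ← two_mul, pow_mul]
    simp
  · rw [Finset.sum_congr rfl fun p hp => by
      rw [hψ p.1 (Finset.mem_offDiag.1 hp).1 p.2 (Finset.mem_offDiag.1 hp).2.1],
      sum_offDiag_single_eq_sum_smul _ _ fun p => by simp [mul_comm]]
    exact Finset.sum_congr rfl fun p hp => by
      rw [proj_pmVec_sub_proj_pmVec (Finset.mem_offDiag.1 hp).2.2]

noncomputable def stabCoeff : S ⊕ (S.offDiag × Bool) → ℝ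
  | .inl _ => (S.card : ℝ)⁻¹
  | .inr (p, t) =>
    (bif t then 1 else -1) * ((-1) ^ (f p.1.1).val * (-1) ^ (f p.1.2).val / S.card / 2)

noncomputable def stabTerm : S ⊕ (S.offDiag × Bool) → Matrix (Fin n → ZMod 2) (Fin n → ZMod 2) ℂ
  | .inl x => proj (Pi.single x.1 1)
  | .inr (p, t) => proj (pmVec p.1.1 p.1.2 (bif t then 1 else -1))

lemma isStabState_stabTerm : ∀ i, IsStabState (stabTerm S i)
  | .inl x => isStabState_proj_pi_single x.1
  | .inr (p, t) => isStabState_proj_pmVec (Finset.mem_offDiag.1 p.2).2.2 (by cases t <;> norm_num)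

lemma sum_stabCoeff_smul_stabTerm :
    ∑ i, (stabCoeff S f i : ℂ) • stabTerm S i = proj (subsetPhaseVec S f) := by
  rw [proj_subsetPhaseVec, Fintype.sum_sum_type, Fintype.sum_prod_type, ← Finset.sum_coe_sort S,
    ← Finset.sum_coe_sort S.offDiag]
  congr 1 <;> refine Fintype.sum_congr _ _ fun x => ?_
  · simp [stabCoeff, stabTerm]
  · simp [stabCoeff, stabTerm, sub_eq_add_neg]

lemma sum_abs_stabCoeff : ∑ i, |stabCoeff S f i| = S.card := by
  calc ∑ i, |stabCoeff S f i|
      = S.card * (S.card : ℝ)⁻¹ + (S.card * S.card - S.card : ℕ) * (S.card : ℝ)⁻¹ := by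
        simp [stabCoeff, Fintype.sum_sum_type, Fintype.sum_prod_type, abs_mul, abs_div]
    _ = S.card := by
        rcases Nat.eq_zero_or_pos S.card with h | h
        · simp [h]
        · rw [Nat.cast_sub (Nat.le_mul_self _)]
          field_simp
          push_cast
          ring

end SubsetPhase

lemma exists_fin_sum_smul_stabState {ι : Type*} [Fintype ι] {n : ℕ} (c : ι → ℝ)
    (σ : ι → Matrix (Fin n → ZMod 2) (Fin n → ZMod 2) ℂ) (hσ : ∀ i, IsStabState (σ i)) :
    ∃ (m : ℕ) (c' : Fin m → ℝ) (σ' : Fin m → Matrix (Fin n → ZMod 2) (Fin n → ZMod 2) ℂ),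
      (∀ i, IsStabState (σ' i)) ∧ ∑ i, (c i : ℂ) • σ i = ∑ i, (c' i : ℂ) • σ' i ∧
        ∑ i, |c i| = ∑ i, |c' i| :=
  let e := Fintype.equivFin ι
  ⟨_, c ∘ e.symm, σ ∘ e.symm, fun _ => hσ _, (e.symm.sum_comp _).symm, (e.symm.sum_comp _).symm⟩

/-- `Real.logb 2 0 = 0`, so an infimum `0` is only bounded by `Real.logb 2 t` when the latter is
nonnegative. -/
lemma logRob_le_logb {n : ℕ} {ρ : Matrix (Fin n → ZMod 2) (Fin n → ZMod 2) ℂ} {t : ℝ}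
    (ht : ∃ (m : ℕ) (c : Fin m → ℝ) (σ : Fin m → Matrix (Fin n → ZMod 2) (Fin n → ZMod 2) ℂ),
      (∀ i, IsStabState (σ i)) ∧ ρ = ∑ i, (c i : ℂ) • σ i ∧ t = ∑ i, |c i|)
    (hlog : 0 ≤ Real.logb 2 t) : logRob ρ ≤ Real.logb 2 t := by
  have hnonneg : ∀ s ∈ {t : ℝ | ∃ (m : ℕ) (c : Fin m → ℝ)
      (σ : Fin m → Matrix (Fin n → ZMod 2) (Fin n → ZMod 2) ℂ),
        (∀ i, IsStabState (σ i)) ∧ ρ = ∑ i, (c i : ℂ) • σ i ∧ t = ∑ i, |c i|}, 0 ≤ s := by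
    rintro s ⟨m, c, σ, -, -, rfl⟩
    positivity
  rcases (le_csInf ⟨t, ht⟩ hnonneg).eq_or_lt with h0 | hpos
  · rwa [logRob, ← h0, Real.logb_zero]
  · exact Real.logb_le_logb_of_le one_lt_two hpos (csInf_le ⟨0, hnonneg⟩ ht)

theorem logRob_subset_phase_le_general {n : ℕ} (S : Finset (Fin n → ZMod 2))
    (f : (Fin n → ZMod 2) → ZMod 2) :
    let ψ : (Fin n → ZMod 2) → ℂ :=
      fun x => if x ∈ S then (-1 : ℂ) ^ (f x).val / (Real.sqrt S.card : ℂ) else 0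
    (∃ (m : ℕ) (c : Fin m → ℝ)
        (σ : Fin m → Matrix (Fin n → ZMod 2) (Fin n → ZMod 2) ℂ),
      (∀ i, IsStabState (σ i)) ∧ proj ψ = ∑ i, (c i : ℂ) • σ i ∧
        ∑ i, |c i| ≤ (S.card : ℝ)) ∧
    logRob (proj ψ) ≤ Real.logb 2 (S.card : ℝ) := by
  obtain ⟨m, c, σ, hσ, hsum, habs⟩ :=
    exists_fin_sum_smul_stabState (stabCoeff S f) (stabTerm S) (isStabState_stabTerm S)
  have hψ : proj (subsetPhaseVec S f) = ∑ i, (c i : ℂ) • σ i :=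
    (sum_stabCoeff_smul_stabTerm S f).symm.trans hsum
  have hnorm : ∑ i, |c i| = S.card := habs.symm.trans (sum_abs_stabCoeff S f)
  refine ⟨⟨m, c, σ, hσ, hψ, hnorm.le⟩, logRob_le_logb ⟨m, c, σ, hσ, hψ, hnorm.symm⟩ ?_⟩
  exact div_nonneg (Real.log_natCast_nonneg _) (Real.log_nonneg one_le_two)

/-- robustness of magic upper bound for subset phase states: ψ_{f,S}
decomposes into pure stabilizer states with ℓ¹ coefficient norm at most |S|, hence
ℛ(ψ_{f,S}) ≤ log|S|. -/
theorem logRob_subset_phase_le {n : ℕ} (S : Finset (Fin n → ZMod 2)) (hS : 2 ≤ S.card)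
    (f : (Fin n → ZMod 2) → ZMod 2) :
    let ψ : (Fin n → ZMod 2) → ℂ :=
      fun x => if x ∈ S then (-1 : ℂ) ^ (f x).val / (Real.sqrt S.card : ℂ) else 0
    (∃ (m : ℕ) (c : Fin m → ℝ)
        (σ : Fin m → Matrix (Fin n → ZMod 2) (Fin n → ZMod 2) ℂ),
      (∀ i, IsStabState (σ i)) ∧ proj ψ = ∑ i, (c i : ℂ) • σ i ∧
        ∑ i, |c i| ≤ (S.card : ℝ)) ∧
    logRob (proj ψ) ≤ Real.logb 2 (S.card : ℝ) :=
  logRob_subset_phase_le_general S f
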